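/- Let (D, {≺_α, ≻_α}_{α∈Ω}) be a dendriform family algebra. On Ω →₀ D define the total product f ⋄ g := Σ_{α,β∈Ω} single(αβ)( f(α) ≺_β g(β) + f(α) ≻_α g(β) ). Then ⋄ is an associative product, i.e. (f ⋄ g) ⋄ h = f ⋄ (g ⋄ h) for all f, g, h ∈ Ω →₀ D. -/

import Mathlib

/- STATEMENT 2: For a dendriform family algebra `(D, {≺_α, ≻_α})`, the total
product `f ⋄ g = Σ_{α,β} single (αβ) (f α ≺_β g β + f α ≻_α g β)` on `Ω →₀ D`
is associative. -/

variable {k : Type*} [Field k] [CharZero k]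
variable {Ω : Type*} [Semigroup Ω]
variable {D : Type*} [AddCommGroup D] [Module k D]

/-- the total product `f ⋄ g := Σ_{α,β} single (αβ) (f α ≺_β g β + f α ≻_α g β)`. -/
noncomputable def famTot (prec succ : Ω → D →ₗ[k] D →ₗ[k] D) (f g : Ω →₀ D) : Ω →₀ D :=
  f.sum fun α x => g.sum fun β y => Finsupp.single (α * β) (prec β x y + succ α x y)

lemma famTot_zero_left (prec succ : Ω → D →ₗ[k] D →ₗ[k] D) (g : Ω →₀ D) :
    famTot prec succ 0 g = 0 := by
  simp [famTot]

lemma famTot_zero_right (prec succ : Ω → D →ₗ[k] D →ₗ[k] D) (f : Ω →₀ D) :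
    famTot prec succ f 0 = 0 := by
  simp [famTot]

lemma famTot_single_single (prec succ : Ω → D →ₗ[k] D →ₗ[k] D) (α β : Ω) (x y : D) :
    famTot prec succ (Finsupp.single α x) (Finsupp.single β y)
      = Finsupp.single (α * β) (prec β x y + succ α x y) := by
  unfold famTot
  rw [Finsupp.sum_single_index (by simp [Finsupp.sum]), Finsupp.sum_single_index (by simp)]

lemma famTot_add_left (prec succ : Ω → D →ₗ[k] D →ₗ[k] D) (f f' g : Ω →₀ D) :
    famTot prec succ (f + f') g = famTot prec succ f g + famTot prec succ f' g := by
  classical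
  unfold famTot
  rw [Finsupp.sum_add_index (by intro a _; simp [Finsupp.sum])]
  intro a _ x x'
  rw [← Finsupp.sum_add]
  apply Finsupp.sum_congr
  intro b hb
  rw [← Finsupp.single_add]
  congr 1
  simp [map_add]
  abel

lemma famTot_add_right (prec succ : Ω → D →ₗ[k] D →ₗ[k] D) (f g g' : Ω →₀ D) :
    famTot prec succ f (g + g') = famTot prec succ f g + famTot prec succ f g' := by
  classical
  unfold famTot
  rw [← Finsupp.sum_add]
  apply Finsupp.sum_congr
  intro a _
  rw [Finsupp.sum_add_index (by intro b _; simp)]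
  intro b _ y y'
  rw [← Finsupp.single_add]
  congr 1
  simp [map_add]
  abel

theorem dendriform_family_total_product_assoc
    (prec succ : Ω → D →ₗ[k] D →ₗ[k] D)
    -- dendriform family algebra axioms: `prec α x y = x ≺_α y`, `succ α x y = x ≻_α y`
    (hd1 : ∀ (α β : Ω) (x y z : D),
      prec β (prec α x y) z = prec (α * β) x (prec β y z + succ α y z))
    (hd2 : ∀ (α β : Ω) (x y z : D),
      prec β (succ α x y) z = succ α x (prec β y z))
    (hd3 : ∀ (α β : Ω) (x y z : D),
      succ (α * β) (prec β x y + succ α x y) z = succ α x (succ β y z)) :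
    ∀ f g h : Ω →₀ D,
      famTot prec succ (famTot prec succ f g) h
        = famTot prec succ f (famTot prec succ g h) := by
  intro f g h
  induction f using Finsupp.induction with
  | zero => simp [famTot_zero_left]
  | single_add a x f _ _ ihf =>
    rw [famTot_add_left, famTot_add_left, famTot_add_left, ihf]
    congr 1
    clear ihf
    induction g using Finsupp.induction with
    | zero => simp [famTot_zero_left, famTot_zero_right]
    | single_add b y g _ _ ihg =>
      rw [famTot_add_right, famTot_add_left, famTot_add_left, famTot_add_right, ihg]
      congr 1
      clear ihg
      induction h using Finsupp.induction with
      | zero => simp [famTot_zero_right]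
      | single_add c z h _ _ ihh =>
        rw [famTot_add_right, famTot_add_right, famTot_add_right, ihh]
        congr 1
        clear ihh
        rw [famTot_single_single, famTot_single_single, famTot_single_single,
          famTot_single_single]
        rw [mul_assoc]
        congr 1
        rw [map_add, LinearMap.add_apply, hd1, hd2, hd3, map_add (succ a x)]
        abel
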